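/- arXiv:2207.07702 — 2 statements merged into one kernel-verified Lean document; each statement's English description precedes it below -/
import Mathlib

section
/- If ξ, η ∈ ℝ^d \ {0} satisfy |ξ| + |η| ≤ 3·||ξ| − |η|| and ξ + η ≠ 0, then μ(ξ + η) ≤ 3(μ(ξ) + μ(η)), where μ(ζ) = |ζ₁|/|ζ| + |ζ|. -/
/-- The anisotropic multiplier `μ(ζ) = |ζ₁|/|ζ| + |ζ|`. -/
noncomputable def mu {d : ℕ} [NeZero d] (ζ : EuclideanSpace ℝ (Fin d)) : ℝ :=
  |ζ 0| / ‖ζ‖ + ‖ζ‖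

lemma mu_aux (d : ℕ) [NeZero d] (ξ η : EuclideanSpace ℝ (Fin d))
    (hξ : ξ ≠ 0) (hη : η ≠ 0) (hsum : ξ + η ≠ 0)
    (hle : ‖η‖ ≤ ‖ξ‖) (h : ‖ξ‖ + ‖η‖ ≤ 3 * (‖ξ‖ - ‖η‖)) :
    mu (ξ + η) ≤ 3 * (mu ξ + mu η) := by
  have ha : 0 < ‖ξ‖ := norm_pos_iff.mpr hξ
  have hb : 0 < ‖η‖ := norm_pos_iff.mpr hη
  have hN : 0 < ‖ξ + η‖ := norm_pos_iff.mpr hsum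
  have hb2 : 2 * ‖η‖ ≤ ‖ξ‖ := by linarith
  have hlow : ‖ξ‖ - ‖η‖ ≤ ‖ξ + η‖ := by
    have : ‖ξ‖ ≤ ‖ξ + η‖ + ‖η‖ := by
      have := norm_add_le (ξ + η) (-η)
      simpa using this
    linarith
  have hN2 : ‖ξ‖ / 2 ≤ ‖ξ + η‖ := by linarith
  have hNb : ‖η‖ ≤ ‖ξ + η‖ := by linarith
  have h0 : |(ξ + η) 0| ≤ |ξ 0| + |η 0| := by
    have : (ξ + η) 0 = ξ 0 + η 0 := rfl
    rw [this]; exact abs_add_le _ _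
  have hup : ‖ξ + η‖ ≤ ‖ξ‖ + ‖η‖ := norm_add_le ξ η
  have hx : |ξ 0| / ‖ξ + η‖ ≤ 2 * |ξ 0| / ‖ξ‖ := by
    rw [div_le_div_iff₀ hN ha]
    nlinarith [abs_nonneg (ξ 0)]
  have hy : |η 0| / ‖ξ + η‖ ≤ |η 0| / ‖η‖ := by
    apply div_le_div_of_nonneg_left (abs_nonneg _) hb hNb
  have hxξ : 0 ≤ |ξ 0| / ‖ξ‖ := div_nonneg (abs_nonneg _) ha.le
  have hyη : 0 ≤ |η 0| / ‖η‖ := div_nonneg (abs_nonneg _) hb.le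
  have hsplit : |(ξ + η) 0| / ‖ξ + η‖ ≤ |ξ 0| / ‖ξ + η‖ + |η 0| / ‖ξ + η‖ := by
    rw [← add_div]
    gcongr
  unfold mu
  calc |(ξ + η) 0| / ‖ξ + η‖ + ‖ξ + η‖
      ≤ (|ξ 0| / ‖ξ + η‖ + |η 0| / ‖ξ + η‖) + (‖ξ‖ + ‖η‖) := by
        exact add_le_add hsplit hup
    _ ≤ (2 * |ξ 0| / ‖ξ‖ + |η 0| / ‖η‖) + (‖ξ‖ + ‖η‖) := by
        exact add_le_add (add_le_add hx hy) le_rfl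
    _ ≤ 3 * ((|ξ 0| / ‖ξ‖ + ‖ξ‖) + (|η 0| / ‖η‖ + ‖η‖)) := by
        have : 2 * |ξ 0| / ‖ξ‖ = 2 * (|ξ 0| / ‖ξ‖) := by ring
        rw [this]; linarith

/-- Multiplier subadditivity in the good region: if `|ξ| + |η| ≤ 3·||ξ| − |η||` and
`ξ, η, ξ+η` are nonzero, then `μ(ξ+η) ≤ 3(μ(ξ) + μ(η))`. -/
theorem stmt2 (d : ℕ) [NeZero d] (ξ η : EuclideanSpace ℝ (Fin d))
    (hξ : ξ ≠ 0) (hη : η ≠ 0) (hsum : ξ + η ≠ 0)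
    (h : ‖ξ‖ + ‖η‖ ≤ 3 * |‖ξ‖ - ‖η‖|) :
    mu (ξ + η) ≤ 3 * (mu ξ + mu η) := by
  rcases le_total ‖η‖ ‖ξ‖ with hle | hle
  · have habs : |‖ξ‖ - ‖η‖| = ‖ξ‖ - ‖η‖ := abs_of_nonneg (by linarith)
    exact mu_aux d ξ η hξ hη hsum hle (by rwa [habs] at h)
  · have habs : |‖ξ‖ - ‖η‖| = ‖η‖ - ‖ξ‖ := by
      rw [abs_sub_comm]; exact abs_of_nonneg (by linarith)
    have := mu_aux d η ξ hη hξ (by rwa [add_comm] at hsum) hle (by rw [habs] at h; linarith)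
    rw [add_comm ξ η]; linarith
end

section
/- Let d ≥ 2, let E₀ = {(ξ,η) ∈ B(0,1)² : ξ ≠ 0, η ≠ 0, ξ+η ≠ 0, |ξ|+|η| ≤ 3||ξ|−|η||}, and let μ(ζ) = |ζ₁|/|ζ| + |ζ|. Then for all nonnegative measurable F, G, H : ℝ^d → [0,∞], ∫∫_{E₀} (μ(ξ+η)/(μ(ξ)μ(η))) F(ξ)G(η)H(ξ+η) dξ dη ≤ 6 ‖1/μ‖_{L²(B(0,1))} ‖F‖_{L²} ‖G‖_{L²} ‖H‖_{L²}. -/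
open MeasureTheory Metric ENNReal

section aux

variable {d : ℕ} [NeZero d]

lemma mu_nonneg (ζ : EuclideanSpace ℝ (Fin d)) : 0 ≤ mu ζ :=
  add_nonneg (div_nonneg (abs_nonneg _) (norm_nonneg _)) (norm_nonneg _)

lemma mu_pos {ζ : EuclideanSpace ℝ (Fin d)} (h : ζ ≠ 0) : 0 < mu ζ :=
  add_pos_of_nonneg_of_pos (div_nonneg (abs_nonneg _) (norm_nonneg _))
    (norm_pos_iff.mpr h)

lemma mu_measurable : Measurable (mu (d := d)) := by
  have hn : Measurable fun ζ : EuclideanSpace ℝ (Fin d) => ‖ζ‖ := continuous_norm.measurable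
  have h0 : Measurable fun ζ : EuclideanSpace ℝ (Fin d) => ζ 0 :=
    (EuclideanSpace.proj (0 : Fin d)).continuous.measurable
  exact ((h0.abs).div hn).add hn

/-- key geometric inequality on the separated region. -/
lemma mu_add_le {ξ η : EuclideanSpace ℝ (Fin d)} (hξ : ξ ≠ 0) (hη : η ≠ 0)
    (hξη : ξ + η ≠ 0) (hsep : ‖ξ‖ + ‖η‖ ≤ 3 * |‖ξ‖ - ‖η‖|) :
    mu (ξ + η) ≤ 3 * mu ξ + 3 * mu η := by
  have hX : 0 < ‖ξ + η‖ := norm_pos_iff.mpr hξη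
  have hnξ : 0 < ‖ξ‖ := norm_pos_iff.mpr hξ
  have hnη : 0 < ‖η‖ := norm_pos_iff.mpr hη
  have habs : |‖ξ‖ - ‖η‖| ≤ ‖ξ + η‖ := by
    simpa [sub_neg_eq_add] using abs_norm_sub_norm_le ξ (-η)
  have hS : ‖ξ‖ + ‖η‖ ≤ 3 * ‖ξ + η‖ := hsep.trans (by linarith)
  have htri : ‖ξ + η‖ ≤ ‖ξ‖ + ‖η‖ := norm_add_le ξ η
  have e1 : |ξ 0| / ‖ξ + η‖ ≤ 3 * (|ξ 0| / ‖ξ‖) := by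
    rw [mul_div_assoc', div_le_div_iff₀ hX hnξ]
    nlinarith [abs_nonneg (ξ 0)]
  have e2 : |η 0| / ‖ξ + η‖ ≤ 3 * (|η 0| / ‖η‖) := by
    rw [mul_div_assoc', div_le_div_iff₀ hX hnη]
    nlinarith [abs_nonneg (η 0)]
  have e0 : |(ξ + η) 0| / ‖ξ + η‖ ≤ |ξ 0| / ‖ξ + η‖ + |η 0| / ‖ξ + η‖ := by
    rw [← add_div]
    gcongr
    simpa using abs_add_le (ξ 0) (η 0)
  have : mu (ξ + η) ≤ |ξ 0| / ‖ξ + η‖ + |η 0| / ‖ξ + η‖ + ‖ξ + η‖ := by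
    unfold mu
    linarith
  unfold mu
  have h1 : |ξ 0| / ‖ξ‖ ≥ 0 := div_nonneg (abs_nonneg _) (norm_nonneg _)
  have h2 : |η 0| / ‖η‖ ≥ 0 := div_nonneg (abs_nonneg _) (norm_nonneg _)
  linarith

/-- Cauchy–Schwarz for the lower Lebesgue integral. -/
lemma cs_lintegral {X : Type*} [MeasurableSpace X] {μ : Measure X} {f g : X → ℝ≥0∞}
    (hf : AEMeasurable f μ) (hg : AEMeasurable g μ) :
    ∫⁻ x, f x * g x ∂μ ≤
      (∫⁻ x, f x ^ (2 : ℝ) ∂μ) ^ (1 / 2 : ℝ) * (∫⁻ x, g x ^ (2 : ℝ) ∂μ) ^ (1 / 2 : ℝ) :=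
  ENNReal.lintegral_mul_le_Lp_mul_Lq μ Real.HolderConjugate.two_two hf hg

end aux

/-- Boundedness of the trilinear functional `I₀` over the good region `E₀`:
`∫∫_{E₀} (μ(ξ+η)/(μ(ξ)μ(η))) F(ξ)G(η)H(ξ+η) ≤ 6‖1/μ‖_{L²(B(0,1))}‖F‖_{L²}‖G‖_{L²}‖H‖_{L²}`. -/
theorem stmt3 (d : ℕ) [NeZero d] (hd : 2 ≤ d)
    (F G H : EuclideanSpace ℝ (Fin d) → ℝ)
    (hF : Measurable F) (hG : Measurable G) (hH : Measurable H)
    (hF0 : ∀ x, 0 ≤ F x) (hG0 : ∀ x, 0 ≤ G x) (hH0 : ∀ x, 0 ≤ H x) :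
    ∫⁻ p in {p : EuclideanSpace ℝ (Fin d) × EuclideanSpace ℝ (Fin d) |
        p.1 ∈ ball 0 1 ∧ p.2 ∈ ball 0 1 ∧ p.1 ≠ 0 ∧ p.2 ≠ 0 ∧ p.1 + p.2 ≠ 0 ∧
        ‖p.1‖ + ‖p.2‖ ≤ 3 * |‖p.1‖ - ‖p.2‖|},
      ENNReal.ofReal (mu (p.1 + p.2) / (mu p.1 * mu p.2) * F p.1 * G p.2 * H (p.1 + p.2))
    ≤ 6 * (∫⁻ ξ in ball (0 : EuclideanSpace ℝ (Fin d)) 1,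
          ENNReal.ofReal ((mu ξ)⁻¹ ^ 2)) ^ (1 / 2 : ℝ) *
        eLpNorm F 2 volume * eLpNorm G 2 volume * eLpNorm H 2 volume := by
  classical
  set f : EuclideanSpace ℝ (Fin d) → ℝ≥0∞ := fun x => ENNReal.ofReal (F x) with hf_def
  set g : EuclideanSpace ℝ (Fin d) → ℝ≥0∞ := fun x => ENNReal.ofReal (G x) with hg_def
  set h : EuclideanSpace ℝ (Fin d) → ℝ≥0∞ := fun x => ENNReal.ofReal (H x) with hh_def
  set u : EuclideanSpace ℝ (Fin d) → ℝ≥0∞ := fun x => ENNReal.ofReal (mu x)⁻¹ with hu_def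
  have hfm : Measurable f := ENNReal.measurable_ofReal.comp hF
  have hgm : Measurable g := ENNReal.measurable_ofReal.comp hG
  have hhm : Measurable h := ENNReal.measurable_ofReal.comp hH
  have hum : Measurable u := ENNReal.measurable_ofReal.comp mu_measurable.inv
  set B : Set (EuclideanSpace ℝ (Fin d)) := ball 0 1 with hB_def
  set S : Set (EuclideanSpace ℝ (Fin d) × EuclideanSpace ℝ (Fin d)) :=
    {p : EuclideanSpace ℝ (Fin d) × EuclideanSpace ℝ (Fin d) |
      p.1 ∈ ball 0 1 ∧ p.2 ∈ ball 0 1 ∧ p.1 ≠ 0 ∧ p.2 ≠ 0 ∧ p.1 + p.2 ≠ 0 ∧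
      ‖p.1‖ + ‖p.2‖ ≤ 3 * |‖p.1‖ - ‖p.2‖|} with hS_def
  set If := (∫⁻ x, f x ^ (2 : ℝ)) ^ (1 / 2 : ℝ) with hIf
  set Ig := (∫⁻ x, g x ^ (2 : ℝ)) ^ (1 / 2 : ℝ) with hIg
  set Ih := (∫⁻ x, h x ^ (2 : ℝ)) ^ (1 / 2 : ℝ) with hIh
  set M := (∫⁻ ξ in B, ENNReal.ofReal ((mu ξ)⁻¹ ^ 2)) ^ (1 / 2 : ℝ) with hM
  -- identify eLpNorms
  have hsnorm : ∀ (φ : EuclideanSpace ℝ (Fin d) → ℝ), (∀ x, 0 ≤ φ x) →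
      eLpNorm φ 2 volume = (∫⁻ x, ENNReal.ofReal (φ x) ^ (2 : ℝ)) ^ (1 / 2 : ℝ) := by
    intro φ hφ0
    rw [eLpNorm_eq_lintegral_rpow_enorm_toReal (by norm_num) (by norm_num)]
    simp only [ENNReal.toReal_ofNat]
    congr 1
    refine lintegral_congr fun x => ?_
    rw [Real.enorm_eq_ofReal (hφ0 x)]
  -- the u² integral over B equals the M integrand
  have hMeq : (∫⁻ ξ in B, u ξ ^ (2 : ℝ)) ^ (1 / 2 : ℝ) = M := by
    rw [hM]
    congr 1
    refine lintegral_congr fun ξ => ?_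
    rw [hu_def]
    simp only
    rw [ENNReal.ofReal_pow (inv_nonneg.mpr (mu_nonneg ξ)), ← ENNReal.rpow_natCast]
    norm_num
  -- pointwise bound
  set T₁ : EuclideanSpace ℝ (Fin d) × EuclideanSpace ℝ (Fin d) → ℝ≥0∞ :=
    fun p => 3 * u p.1 * f p.1 * (g p.2 * h (p.1 + p.2)) with hT₁
  set T₂ : EuclideanSpace ℝ (Fin d) × EuclideanSpace ℝ (Fin d) → ℝ≥0∞ :=
    fun p => 3 * u p.2 * g p.2 * (f p.1 * h (p.1 + p.2)) with hT₂
  have hT₁m : Measurable T₁ := by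
    rw [hT₁]
    refine Measurable.mul (f := fun p : EuclideanSpace ℝ (Fin d) × EuclideanSpace ℝ (Fin d) => 3 * u p.1 * f p.1) (g := fun p : EuclideanSpace ℝ (Fin d) × EuclideanSpace ℝ (Fin d) => g p.2 * h (p.1 + p.2)) ?_ ?_
    · exact ((measurable_const.mul (hum.comp measurable_fst)).mul (hfm.comp measurable_fst))
    · exact (hgm.comp measurable_snd).mul (hhm.comp (measurable_fst.add measurable_snd))
  have hT₂m : Measurable T₂ := by
    rw [hT₂]
    refine Measurable.mul (f := fun p : EuclideanSpace ℝ (Fin d) × EuclideanSpace ℝ (Fin d) => 3 * u p.2 * g p.2) (g := fun p : EuclideanSpace ℝ (Fin d) × EuclideanSpace ℝ (Fin d) => f p.1 * h (p.1 + p.2)) ?_ ?_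
    · exact ((measurable_const.mul (hum.comp measurable_snd)).mul (hgm.comp measurable_snd))
    · exact (hfm.comp measurable_fst).mul (hhm.comp (measurable_fst.add measurable_snd))
  have hpoint : ∀ p ∈ S,
      ENNReal.ofReal (mu (p.1 + p.2) / (mu p.1 * mu p.2) * F p.1 * G p.2 * H (p.1 + p.2))
        ≤ T₁ p + T₂ p := by
    rintro ⟨ξ, η⟩ ⟨-, -, hξ, hη, hξη, hsep⟩
    have haξ : 0 < mu ξ := mu_pos hξ
    have haη : 0 < mu η := mu_pos hη
    have hratio : mu (ξ + η) / (mu ξ * mu η) ≤ 3 * (mu ξ)⁻¹ + 3 * (mu η)⁻¹ := by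
      rw [div_le_iff₀ (mul_pos haξ haη)]
      have hkey := mu_add_le hξ hη hξη hsep
      have e : (3 * (mu ξ)⁻¹ + 3 * (mu η)⁻¹) * (mu ξ * mu η) = 3 * mu η + 3 * mu ξ := by
        field_simp
      rw [e]; linarith
    calc ENNReal.ofReal (mu (ξ + η) / (mu ξ * mu η) * F ξ * G η * H (ξ + η))
        = ENNReal.ofReal (mu (ξ + η) / (mu ξ * mu η)) * f ξ * g η * h (ξ + η) := by
          have n0 : (0:ℝ) ≤ mu (ξ + η) / (mu ξ * mu η) :=
            div_nonneg (mu_nonneg _) (mul_nonneg (mu_nonneg _) (mu_nonneg _))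
          rw [hf_def, hg_def, hh_def]
          rw [ENNReal.ofReal_mul (mul_nonneg (mul_nonneg n0 (hF0 ξ)) (hG0 η)),
            ENNReal.ofReal_mul (mul_nonneg n0 (hF0 ξ)), ENNReal.ofReal_mul n0]
      _ ≤ ENNReal.ofReal (3 * (mu ξ)⁻¹ + 3 * (mu η)⁻¹) * f ξ * g η * h (ξ + η) := by
          gcongr
      _ = T₁ (ξ, η) + T₂ (ξ, η) := by
          rw [hT₁, hT₂, hu_def]
          simp only
          rw [ENNReal.ofReal_add (by positivity) (by positivity),
            ENNReal.ofReal_mul (by norm_num), ENNReal.ofReal_mul (by norm_num)]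
          norm_num
          ring
  -- first term
  have step1 : ∫⁻ p in S, T₁ p ≤ 3 * M * If * (Ig * Ih) := by
    have hsub : S ⊆ B ×ˢ (Set.univ : Set (EuclideanSpace ℝ (Fin d))) := by
      rintro ⟨ξ, η⟩ ⟨h1, -⟩; exact ⟨h1, trivial⟩
    refine (lintegral_mono_set hsub).trans ?_
    rw [Measure.volume_eq_prod, ← Measure.prod_restrict, Measure.restrict_univ]
    rw [MeasureTheory.lintegral_prod _ (hT₁m.aemeasurable)]
    have inner : ∀ ξ : EuclideanSpace ℝ (Fin d),
        ∫⁻ η, T₁ (ξ, η) ≤ 3 * u ξ * f ξ * (Ig * Ih) := by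
      intro ξ
      have hne : 3 * u ξ * f ξ ≠ ∞ := by
        rw [hu_def, hf_def]
        exact ENNReal.mul_ne_top (ENNReal.mul_ne_top (by norm_num) ENNReal.ofReal_ne_top)
          ENNReal.ofReal_ne_top
      rw [hT₁]
      simp only
      rw [lintegral_const_mul' _ _ hne]
      gcongr
      calc ∫⁻ η, g η * h (ξ + η)
          ≤ (∫⁻ η, g η ^ (2:ℝ)) ^ (1/2:ℝ) * (∫⁻ η, h (ξ + η) ^ (2:ℝ)) ^ (1/2:ℝ) :=
            cs_lintegral hgm.aemeasurable
              ((hhm.comp (measurable_const.add measurable_id)).aemeasurable)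
        _ = Ig * Ih := by
            rw [hIg, hIh]
            congr 2
            exact lintegral_add_left_eq_self (fun x => h x ^ (2:ℝ)) ξ
    calc ∫⁻ ξ in B, ∫⁻ η, T₁ (ξ, η)
        ≤ ∫⁻ ξ in B, 3 * u ξ * f ξ * (Ig * Ih) := lintegral_mono fun ξ => inner ξ
      _ = 3 * (Ig * Ih) * ∫⁻ ξ in B, u ξ * f ξ := by
          rw [← lintegral_const_mul (f := fun ξ => u ξ * f ξ) _ (hum.mul hfm)]
          exact lintegral_congr fun ξ => by ring
      _ ≤ 3 * (Ig * Ih) * (M * If) := by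
          gcongr
          calc ∫⁻ ξ in B, u ξ * f ξ
              ≤ (∫⁻ ξ in B, u ξ ^ (2:ℝ)) ^ (1/2:ℝ) * (∫⁻ ξ in B, f ξ ^ (2:ℝ)) ^ (1/2:ℝ) :=
                cs_lintegral hum.aemeasurable hfm.aemeasurable
            _ ≤ M * If := by
                rw [hMeq, hIf]
                gcongr
                exact Measure.restrict_le_self
      _ = 3 * M * If * (Ig * Ih) := by ring
  -- second term
  have step2 : ∫⁻ p in S, T₂ p ≤ 3 * M * Ig * (If * Ih) := by
    have hsub : S ⊆ (Set.univ : Set (EuclideanSpace ℝ (Fin d))) ×ˢ B := by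
      rintro ⟨ξ, η⟩ ⟨-, h2, -⟩; exact ⟨trivial, h2⟩
    refine (lintegral_mono_set hsub).trans ?_
    rw [Measure.volume_eq_prod, ← Measure.prod_restrict, Measure.restrict_univ]
    rw [MeasureTheory.lintegral_prod_symm _ (hT₂m.aemeasurable)]
    have inner : ∀ η : EuclideanSpace ℝ (Fin d),
        ∫⁻ ξ, T₂ (ξ, η) ≤ 3 * u η * g η * (If * Ih) := by
      intro η
      have hne : 3 * u η * g η ≠ ∞ := by
        rw [hu_def, hg_def]
        exact ENNReal.mul_ne_top (ENNReal.mul_ne_top (by norm_num) ENNReal.ofReal_ne_top)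
          ENNReal.ofReal_ne_top
      rw [hT₂]
      simp only
      rw [lintegral_const_mul' _ _ hne]
      gcongr
      calc ∫⁻ ξ, f ξ * h (ξ + η)
          ≤ (∫⁻ ξ, f ξ ^ (2:ℝ)) ^ (1/2:ℝ) * (∫⁻ ξ, h (ξ + η) ^ (2:ℝ)) ^ (1/2:ℝ) :=
            cs_lintegral hfm.aemeasurable
              ((hhm.comp (measurable_id.add measurable_const)).aemeasurable)
        _ = If * Ih := by
            rw [hIf, hIh]
            congr 2
            exact lintegral_add_right_eq_self (fun x => h x ^ (2:ℝ)) η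
    calc ∫⁻ η in B, ∫⁻ ξ, T₂ (ξ, η)
        ≤ ∫⁻ η in B, 3 * u η * g η * (If * Ih) := lintegral_mono fun η => inner η
      _ = 3 * (If * Ih) * ∫⁻ η in B, u η * g η := by
          rw [← lintegral_const_mul (f := fun ξ => u ξ * g ξ) _ (hum.mul hgm)]
          exact lintegral_congr fun η => by ring
      _ ≤ 3 * (If * Ih) * (M * Ig) := by
          gcongr
          calc ∫⁻ η in B, u η * g η
              ≤ (∫⁻ η in B, u η ^ (2:ℝ)) ^ (1/2:ℝ) * (∫⁻ η in B, g η ^ (2:ℝ)) ^ (1/2:ℝ) :=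
                cs_lintegral hum.aemeasurable hgm.aemeasurable
            _ ≤ M * Ig := by
                rw [hMeq, hIg]
                gcongr
                exact Measure.restrict_le_self
      _ = 3 * M * Ig * (If * Ih) := by ring
  -- assemble
  calc ∫⁻ p in S,
        ENNReal.ofReal (mu (p.1 + p.2) / (mu p.1 * mu p.2) * F p.1 * G p.2 * H (p.1 + p.2))
      ≤ ∫⁻ p in S, (T₁ p + T₂ p) :=
        setLIntegral_mono (hT₁m.add hT₂m) hpoint
    _ = (∫⁻ p in S, T₁ p) + ∫⁻ p in S, T₂ p := lintegral_add_left (hT₁m) _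
    _ ≤ 3 * M * If * (Ig * Ih) + 3 * M * Ig * (If * Ih) := add_le_add step1 step2
    _ = 6 * M * If * Ig * Ih := by ring
    _ = 6 * M * eLpNorm F 2 volume * eLpNorm G 2 volume * eLpNorm H 2 volume := by
        rw [hsnorm F hF0, hsnorm G hG0, hsnorm H hH0, hIf, hIg, hIh]
end
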